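/- Let λ and μ be simple valuations on the algebra A with basis (t_Γ), with λ strict. Suppose w is a valuation with λ ≤ w ≤ μ (pointwise), w agrees with μ on all t_α, and μ = C·λ for some C ≥ 1 on all single curves t_γ. Then w = C·λ on all of A. -/

import Mathlib

/-!
Both `mv` and `lv` obey the max rule over the basis, and `mv = c·lv` on every `t Γ` (on single
curves by hypothesis, on multicurves by additivity over the curves), so `mv = c·lv` on all of `A`.
Strictness of `lv` gives a nonzero `f` a unique leading term: `f = a • t Γ + g` with
`lv g < lv (t Γ) = lv f`. Then `w (a • t Γ) = mv (t Γ) = c·lv f`, while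
`w g ≤ mv g = c·lv g < c·lv f`, and the equality case of the ultrametric inequality gives
`w f = c·lv f`.
-/

namespace EReal

theorem strictMono_coe_mul {c : ℝ} (hc : 0 < c) : StrictMono fun x : EReal => (c : EReal) * x := by
  intro a b hab
  induction a <;> induction b <;>
    simp_all [coe_mul_bot_of_pos hc, coe_mul_top_of_pos hc, ← coe_mul, mul_lt_mul_iff_right₀ hc]

theorem coe_mul_multiset_sum_map {ι : Type*} {c : ℝ} (hc : 0 ≤ c) (f : ι → EReal)
    (s : Multiset ι) : (c : EReal) * (s.map f).sum = (s.map fun i => (c : EReal) * f i).sum := by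
  induction s using Multiset.induction with
  | empty => simp
  | cons i s ih =>
    simp only [Multiset.map_cons, Multiset.sum_cons,
      left_distrib_of_nonneg_of_ne_top (EReal.coe_nonneg.2 hc) (coe_ne_top c), ih]

end EReal

theorem apply_add_eq_left_of_lt {G α : Type*} [AddGroup G] [LinearOrder α] {v : G → α}
    (hneg : ∀ x, v (-x) = v x) (hadd : ∀ x y, v (x + y) ≤ max (v x) (v y)) {x y : G}
    (h : v y < v x) : v (x + y) = v x := by
  refine le_antisymm ((hadd x y).trans (max_le le_rfl h.le)) ?_
  have hx : v x ≤ max (v (x + y)) (v y) := by simpa [hneg] using hadd (x + y) (-y)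
  exact (le_max_iff.1 hx).resolve_right h.not_ge

theorem apply_smul_of_ne_zero {K A M : Type*} [CommSemiring K] [Semiring A] [Algebra K A]
    [AddZeroClass M] {v : A → M} (hC : ∀ z : K, z ≠ 0 → v (algebraMap K A z) = 0)
    (hmul : ∀ f g : A, v (f * g) = v f + v g) {z : K} (hz : z ≠ 0) (x : A) :
    v (z • x) = v x := by
  rw [Algebra.smul_def, hmul, hC z hz, zero_add]

namespace Module.Basis

variable {ι R M α : Type*} [Semiring R] [AddCommMonoid M] [Module R M] (t : Basis ι R M)
  [LinearOrder α] [OrderBot α]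

theorem apply_eq_sup_support {v : M → α} (h0 : v 0 = ⊥)
    (hv : ∀ f, f ≠ 0 → v f = (t.repr f).support.sup fun i => v (t i)) (f : M) :
    v f = (t.repr f).support.sup fun i => v (t i) := by
  rcases eq_or_ne f 0 with rfl | hf
  · simp [h0]
  · exact hv f hf

theorem apply_eq_comp_of_apply_basis_eq {β : Type*} [SemilatticeSup β] [OrderBot β]
    {v : M → α} {v' : M → β} {φ : α → β} (hφ : Monotone φ) (hφ0 : φ ⊥ = ⊥)
    (hv : ∀ f, v f = (t.repr f).support.sup fun i => v (t i))
    (hv' : ∀ f, v' f = (t.repr f).support.sup fun i => v' (t i))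
    (hbasis : ∀ i, v' (t i) = φ (v (t i))) (f : M) : v' f = φ (v f) := by
  rw [hv', hv, Finset.apply_sup_eq_sup_comp_of_linearOrder φ hφ hφ0]
  exact Finset.sup_congr rfl fun i _ => hbasis i

theorem exists_eq_smul_add_of_injective {v : M → α}
    (hv : ∀ f, v f = (t.repr f).support.sup fun i => v (t i))
    (hinj : Function.Injective fun i => v (t i)) {f : M} (hf : f ≠ 0) :
    ∃ i, ∃ a : R, ∃ g, a ≠ 0 ∧ f = a • t i + g ∧ v f = v (t i) ∧ (g = 0 ∨ v g < v (t i)) := by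
  have hsupp : (t.repr f).support.Nonempty := by simpa using hf
  obtain ⟨i, hi, himax⟩ := Finset.exists_max_image _ (fun i => v (t i)) hsupp
  set g := t.repr.symm ((t.repr f).erase i)
  have hg_repr : t.repr g = (t.repr f).erase i := t.repr.apply_symm_apply _
  refine ⟨i, t.repr f i, g, Finsupp.mem_support_iff.1 hi, ?_,
    (hv f).trans ((Finset.sup_le himax).antisymm (Finset.le_sup (f := fun i => v (t i)) hi)), ?_⟩
  · apply t.repr.injective
    simp [hg_repr, Finsupp.single_add_erase]
  · refine or_iff_not_imp_left.2 fun hg => ?_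
    have hg_supp : (t.repr g).support.Nonempty := by simpa using hg
    obtain ⟨j, hj, hsup⟩ := Finset.exists_mem_eq_sup _ hg_supp fun i => v (t i)
    classical
    rw [hg_repr, Finsupp.support_erase, Finset.mem_erase] at hj
    rw [hv, hsup]
    exact (himax j hj.2).lt_of_ne (hinj.ne hj.1)

end Module.Basis

theorem stmt12_general (C : Type*) (A : Type*) [CommRing A] [Algebra ℂ A]
    (t : Module.Basis (Multiset C) ℂ A) (lv mv w : A → EReal) (c : ℝ) (hc : 1 ≤ c)
    -- `lv` and `mv` are simple valuations:
    (hlv0 : lv 0 = ⊥) (hmv0 : mv 0 = ⊥) (hw0 : w 0 = ⊥)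
    (hwC : ∀ z : ℂ, z ≠ 0 → w (algebraMap ℂ A z) = 0)
    (hwmul : ∀ f g : A, w (f * g) = w f + w g)
    (hwadd : ∀ f g : A, w (f + g) ≤ max (w f) (w g))
    (hlvbasis : ∀ Γ : Multiset C, lv (t Γ) = (Γ.map fun γ => lv (t {γ})).sum)
    (hmvbasis : ∀ Γ : Multiset C, mv (t Γ) = (Γ.map fun γ => mv (t {γ})).sum)
    (hlvmax : ∀ f : A, f ≠ 0 → lv f = (t.repr f).support.sup fun Γ => lv (t Γ))
    (hmvmax : ∀ f : A, f ≠ 0 → mv f = (t.repr f).support.sup fun Γ => mv (t Γ))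
    -- `lv` is strict:
    (hstrict : ∀ Γ Δ : Multiset C, Γ ≠ Δ → lv (t Γ) ≠ lv (t Δ))
    -- domination `lv ≤ w ≤ mv`:
    (hwm : ∀ f : A, w f ≤ mv f)
    -- `w` agrees with `mv` on all basis elements:
    (hwbasis : ∀ Γ : Multiset C, w (t Γ) = mv (t Γ))
    -- `mv = c·lv` on single curves:
    (hscale : ∀ γ : C, mv (t {γ}) = (c : EReal) * lv (t {γ})) :
    ∀ f : A, w f = (c : EReal) * lv f := by
  have hc0 : (0 : ℝ) < c := by linarith
  have hlv := t.apply_eq_sup_support hlv0 hlvmax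
  have hmv_eq : ∀ f, mv f = c * lv f := by
    refine t.apply_eq_comp_of_apply_basis_eq (EReal.strictMono_coe_mul hc0).monotone
      (EReal.coe_mul_bot_of_pos hc0) hlv (t.apply_eq_sup_support hmv0 hmvmax) fun Γ => ?_
    rw [hmvbasis, hlvbasis, EReal.coe_mul_multiset_sum_map hc0.le]
    exact congrArg Multiset.sum (Multiset.map_congr rfl fun γ _ => hscale γ)
  intro f
  rcases eq_or_ne f 0 with rfl | hf
  · rw [hw0, hlv0, EReal.coe_mul_bot_of_pos hc0]
  obtain ⟨Γ, a, g, ha, rfl, hlvf, hg⟩ :=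
    t.exists_eq_smul_add_of_injective hlv (fun Γ Δ => not_imp_not.1 (hstrict Γ Δ)) hf
  have hwa : w (a • t Γ) = c * lv (t Γ) := by
    rw [apply_smul_of_ne_zero hwC hwmul ha, hwbasis, hmv_eq]
  rw [hlvf, ← hwa]
  rcases hg with rfl | hlt
  · rw [add_zero]
  have hwneg : ∀ x, w (-x) = w x := fun x => by
    rw [← neg_one_smul ℂ x, apply_smul_of_ne_zero hwC hwmul (neg_ne_zero.2 one_ne_zero)]
  refine apply_add_eq_left_of_lt hwneg hwadd ?_
  calc w g ≤ mv g := hwm g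
    _ = c * lv g := hmv_eq g
    _ < c * lv (t Γ) := EReal.strictMono_coe_mul hc0 hlt
    _ = w (a • t Γ) := hwa.symm

/-- Let `lv` and `mv` be simple valuations on the `ℂ`-algebra `A` with multicurve basis
`(t_Γ)`, with `lv` strict.  If a valuation `w` satisfies `lv ≤ w ≤ mv` pointwise, agrees
with `mv` on all basis elements, and `mv = C·lv` on single curves for some `C ≥ 1`, then
`w = C·lv` on all of `A`. -/
theorem stmt12 (C : Type*) (A : Type*) [CommRing A] [Algebra ℂ A]
    (t : Module.Basis (Multiset C) ℂ A) (lv mv w : A → EReal) (c : ℝ) (hc : 1 ≤ c)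
    -- `lv` and `mv` are simple valuations:
    (hlv0 : lv 0 = ⊥) (hmv0 : mv 0 = ⊥) (hw0 : w 0 = ⊥)
    (hlvC : ∀ z : ℂ, z ≠ 0 → lv (algebraMap ℂ A z) = 0)
    (hmvC : ∀ z : ℂ, z ≠ 0 → mv (algebraMap ℂ A z) = 0)
    (hwC : ∀ z : ℂ, z ≠ 0 → w (algebraMap ℂ A z) = 0)
    (hlvmul : ∀ f g : A, lv (f * g) = lv f + lv g)
    (hmvmul : ∀ f g : A, mv (f * g) = mv f + mv g)
    (hwmul : ∀ f g : A, w (f * g) = w f + w g)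
    (hlvadd : ∀ f g : A, lv (f + g) ≤ max (lv f) (lv g))
    (hmvadd : ∀ f g : A, mv (f + g) ≤ max (mv f) (mv g))
    (hwadd : ∀ f g : A, w (f + g) ≤ max (w f) (w g))
    (hlvbasis : ∀ Γ : Multiset C, lv (t Γ) = (Γ.map fun γ => lv (t {γ})).sum)
    (hmvbasis : ∀ Γ : Multiset C, mv (t Γ) = (Γ.map fun γ => mv (t {γ})).sum)
    (hlvmax : ∀ f : A, f ≠ 0 → lv f = (t.repr f).support.sup fun Γ => lv (t Γ))
    (hmvmax : ∀ f : A, f ≠ 0 → mv f = (t.repr f).support.sup fun Γ => mv (t Γ))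
    -- `lv` is strict:
    (hstrict : ∀ Γ Δ : Multiset C, Γ ≠ Δ → lv (t Γ) ≠ lv (t Δ))
    -- domination `lv ≤ w ≤ mv`:
    (hlw : ∀ f : A, lv f ≤ w f) (hwm : ∀ f : A, w f ≤ mv f)
    -- `w` agrees with `mv` on all basis elements:
    (hwbasis : ∀ Γ : Multiset C, w (t Γ) = mv (t Γ))
    -- `mv = c·lv` on single curves:
    (hscale : ∀ γ : C, mv (t {γ}) = (c : EReal) * lv (t {γ})) :
    ∀ f : A, w f = (c : EReal) * lv f :=
  stmt12_general C A t lv mv w c hc hlv0 hmv0 hw0 hwC hwmul hwadd hlvbasis hmvbasis hlvmax hmvmax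
    hstrict hwm hwbasis hscale
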